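/- For all positive integers n and h with h dividing both n and 24, the sums Σ_{(c,d)} |R⁺_{c,d}(τ)| and Σ_{(c,d)} |S⁺_{c,d}(τ)|, taken over all integer pairs (c,d) with c > 0, n | c and gcd(c,d) = 1, converge, and the convergence is locally uniform for τ ∈ ℍ. -/

import Mathlib

/-!
With `z = τ + d/c` and `0 < Y ≤ Im τ ≤ ‖z‖`, the `m`-th term of the inner series of `R⁺_{c,d}` and
of `S⁺_{c,d}` is at most a constant times `c^{-7/2} ‖z‖^{-2} (π/(4Y))^m / m!`, while `ψ` and
`e(±a/(8c))` have modulus one; so both functions are `O(c^{-7/2} ‖z‖^{-2} e^{π/(4Y)})`.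
Now `c^{-7/2} ‖z‖^{-2} = c^{-3/2} ‖cτ + d‖^{-2}`, and `‖cτ + d‖` is bounded below by a multiple of
`1 + |d|` as long as `Im τ` stays away from `0` and `‖τ‖` stays bounded. Hence on every compact
subset of `ℍ` both families are dominated by the summable `c^{-3/2} (1 + |d|)^{-2}`, and the
Weierstrass M-test applies.
-/

noncomputable section

open Complex Filter Topology

namespace Rademacher

attribute [local instance] Classical.propDecidable

/-- `e(x) = exp(2πix)`. -/
def ee (x : ℂ) : ℂ := Complex.exp (2 * Real.pi * Complex.I * x)

/-- The upper half-plane as a subset of `ℂ`. -/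
def HH : Set ℂ := {τ : ℂ | 0 < τ.im}

/-- The sawtooth function `((x))`. -/
def sawtooth (x : ℝ) : ℝ := if Int.fract x = 0 then 0 else Int.fract x - 1/2

/-- The Dedekind sum `s(d,c) = Σ_{m=1}^{c-1} (d/c)((md/c))` (as in the paper). -/
def dedekindS (d c : ℤ) : ℝ :=
  ∑ m ∈ Finset.Ico 1 c.toNat, ((d : ℝ) / (c : ℝ)) * sawtooth ((m : ℝ) * (d : ℝ) / (c : ℝ))

/-- The eta multiplier system `ε`, on the entries `(a,b;c,d)` of a matrix in `SL₂(ℤ)`. -/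
def eps (a b c d : ℤ) : ℂ :=
  if 0 < c then
    ee (-(((a : ℂ) + (d : ℂ)) / (24 * (c : ℂ))) + ((dedekindS d c : ℝ) : ℂ) / 2 + 1/8)
  else if c < 0 then
    ee ((1 : ℂ)/4) *
      ee (-((((-a : ℤ) : ℂ) + ((-d : ℤ) : ℂ)) / (24 * ((-c : ℤ) : ℂ)))
        + ((dedekindS (-d) (-c) : ℝ) : ℂ) / 2 + 1/8)
  else if d = 1 then ee (-(b : ℂ) / 24)
  else ee ((1 : ℂ)/4) * ee ((b : ℂ) / 24)

/-- The character `ρ_{n|h}(γ) = e(−cd/(nh))` on `Γ₀(n)`. -/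
def rho (n h : ℕ) (c d : ℤ) : ℂ := ee (-((c : ℂ) * (d : ℂ)) / ((n : ℂ) * (h : ℂ)))

/-- The multiplier `ψ = ρ_{n|h} · ε^{−3}`. -/
def psi (n h : ℕ) (a b c d : ℤ) : ℂ := rho n h c d * (eps a b c d) ^ (-3 : ℤ)

/-- Möbius action `γτ = (aτ+b)/(cτ+d)`. -/
def moeb (a b c d : ℤ) (τ : ℂ) : ℂ := ((a : ℂ) * τ + (b : ℂ)) / ((c : ℂ) * τ + (d : ℂ))

/-- `jac(γ,τ) = (cτ+d)^{−2}`. -/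
def jac (c d : ℤ) (τ : ℂ) : ℂ := ((c : ℂ) * τ + (d : ℂ)) ^ (-2 : ℤ)

/-- The generalized exponential `e(x,s) = Σ_{m≥0} (2πix)^{m+s}/Γ(m+s+1)` (principal branches). -/
def genExp (x s : ℂ) : ℂ :=
  ∑' m : ℕ, (2 * Real.pi * Complex.I * x) ^ ((m : ℂ) + s) / Complex.Gamma ((m : ℂ) + s + 1)

/-- The Rademacher regularization factor `reg(γ,τ)` of weight `1/2` and index `−1/8`. -/
def reg (a b c d : ℤ) (τ : ℂ) : ℂ :=
  if c = 0 then 1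
  else ee ((moeb a b c d τ - (a : ℂ) / (c : ℂ)) / 8) *
    genExp (((a : ℂ) / (c : ℂ) - moeb a b c d τ) / 8) (1/2)

/-- A choice of upper row `(a,b)` completing the bottom row `(c,d)` to a matrix in `SL₂(ℤ)`. -/
def ab (c d : ℤ) : ℤ × ℤ :=
  if hyp : ∃ p : ℤ × ℤ, p.1 * d - p.2 * c = 1 then hyp.choose else (1, 0)

/-- The summand of the Rademacher sum `R_{n|h}` attached to a coprime pair `(c,d)` with `c > 0`. -/
def Rterm (n h : ℕ) (c d : ℤ) (τ : ℂ) : ℂ :=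
  psi n h (ab c d).1 (ab c d).2 c d * ee (-(moeb (ab c d).1 (ab c d).2 c d τ) / 8) *
    reg (ab c d).1 (ab c d).2 c d τ * (jac c d τ) ^ ((1 : ℂ)/4)

/-- The summand of the Rademacher sum `S_{n|h}` attached to a coprime pair `(c,d)` with `c > 0`. -/
def Sterm (n h : ℕ) (c d : ℤ) (τ : ℂ) : ℂ :=
  (psi n h (ab c d).1 (ab c d).2 c d)⁻¹ * ee ((moeb (ab c d).1 (ab c d).2 c d τ) / 8) *
    (jac c d τ) ^ ((3 : ℂ)/4)

/-- The "rectangle" of pairs `(c,d)` with `0 < c < K`, `n | c`, `−K² < d < K²`, `gcd(c,d) = 1`. -/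
def pairs (n K : ℕ) : Finset (ℤ × ℤ) :=
  ((Finset.Ioo (0 : ℤ) (K : ℤ)) ×ˢ (Finset.Ioo (-(K : ℤ)^2) ((K : ℤ)^2))).filter
    (fun p => p.1 % (n : ℤ) = 0 ∧ Int.gcd p.1 p.2 = 1)

/-- The partial Rademacher sum `R^{<K}_{n|h}(τ)`. -/
def Rpart (n h K : ℕ) (τ : ℂ) : ℂ := ee (-τ/8) + ∑ p ∈ pairs n K, Rterm n h p.1 p.2 τ

/-- The partial Rademacher sum `S^{<K}_{n|h}(τ)`. -/
def Spart (n h K : ℕ) (τ : ℂ) : ℂ := ee (τ/8) + ∑ p ∈ pairs n K, Sterm n h p.1 p.2 τ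

/-- The Dedekind eta function. -/
def eta (τ : ℂ) : ℂ := ee (τ/24) * ∏' m : ℕ, (1 - ee τ ^ (m + 1))

end Rademacher

namespace Rademacher

/-- The function `R⁺_{c,d}(τ)` of the paper. -/
def Rplus (n h : ℕ) (c d : ℤ) (τ : ℂ) : ℂ :=
  psi n h (ab c d).1 (ab c d).2 c d * ee (-((ab c d).1 : ℂ) / (8 * (c : ℂ))) *
    ∑' m : ℕ, (c : ℂ) ^ (-2 * ((m : ℂ) + 1) - 3/2) * (τ + (d : ℂ) / (c : ℂ)) ^ (-(m : ℤ) - 2) *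
      (2 * Real.pi * Complex.I / 8) ^ ((m : ℂ) + 3/2) / Complex.Gamma ((m : ℂ) + 1 + 3/2)

/-- The function `S⁺_{c,d}(τ)` of the paper. -/
def Splus (n h : ℕ) (c d : ℤ) (τ : ℂ) : ℂ :=
  (psi n h (ab c d).1 (ab c d).2 c d)⁻¹ * ee (((ab c d).1 : ℂ) / (8 * (c : ℂ))) *
    ∑' m : ℕ, (c : ℂ) ^ (-2 * ((m : ℂ) + 1) - 3/2) *
      (τ + (d : ℂ) / (c : ℂ)) ^ (-((m : ℂ) + 1) - 3/2) *
      (-(2 * Real.pi * Complex.I) / 8) ^ (m + 1) / ((m + 1).factorial : ℂ)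

/-- `‖R⁺_{c,d}(τ)‖` extended by zero outside the admissible pairs `(c,d)`:
`c > 0`, `n ∣ c`, `gcd(c,d) = 1`. -/
def RplusAbs (n h : ℕ) (p : ℤ × ℤ) (τ : ℂ) : ℝ :=
  if 0 < p.1 ∧ (n : ℤ) ∣ p.1 ∧ Int.gcd p.1 p.2 = 1 then ‖Rplus n h p.1 p.2 τ‖ else 0

/-- `‖S⁺_{c,d}(τ)‖` extended by zero outside the admissible pairs `(c,d)`. -/
def SplusAbs (n h : ℕ) (p : ℤ × ℤ) (τ : ℂ) : ℝ :=
  if 0 < p.1 ∧ (n : ℤ) ∣ p.1 ∧ Int.gcd p.1 p.2 = 1 then ‖Splus n h p.1 p.2 τ‖ else 0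

open scoped Nat

lemma norm_ee_ofReal (x : ℝ) : ‖ee x‖ = 1 := by
  simpa [ee, mul_comm, mul_left_comm] using Complex.norm_exp_ofReal_mul_I (2 * Real.pi * x)

lemma norm_psi (n h : ℕ) (a b : ℤ) {c : ℤ} (d : ℤ) (hc : 0 < c) : ‖psi n h a b c d‖ = 1 := by
  have hrho : ‖rho n h c d‖ = 1 := by
    simpa [rho] using norm_ee_ofReal (-(c * d) / (n * h))
  have heps : ‖eps a b c d‖ = 1 := by
    rw [eps, if_pos hc]
    simpa using norm_ee_ofReal (-((a + d) / (24 * c)) + dedekindS d c / 2 + 1 / 8)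
  rw [psi, norm_mul, norm_zpow, hrho, heps, one_zpow, one_mul]

lemma norm_tsum_le_mul_exp {E : Type*} [NormedAddCommGroup E] {f : ℕ → E} {B t : ℝ}
    (hf : ∀ m, ‖f m‖ ≤ B * (t ^ m / m !)) : ‖∑' m, f m‖ ≤ B * Real.exp t :=
  tsum_of_norm_bounded ((Real.exp_eq_exp_ℝ ▸ NormedSpace.expSeries_div_hasSum_exp t).mul_left B) hf

lemma factorial_le_Gamma_add {s : ℝ} (hs : 1 ≤ s) (m : ℕ) : (m ! : ℝ) ≤ Real.Gamma (m + 1 + s) :=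
  calc (m ! : ℝ) ≤ (m + 1)! := mod_cast Nat.factorial_le m.le_succ
    _ = Real.Gamma ((m + 1 : ℕ) + 1) := (Real.Gamma_nat_eq_factorial _).symm
    _ ≤ Real.Gamma (m + 1 + s) := by
      refine Real.Gamma_strictMonoOn_Ici.monotoneOn ?_ ?_ ?_ <;> simp <;> linarith

lemma norm_intCast_cpow_le {c : ℤ} (hc : 0 < c) (m : ℕ) :
    ‖(c : ℂ) ^ (-2 * ((m : ℂ) + 1) - 3 / 2)‖ ≤ (c : ℝ) ^ (-(7 / 2) : ℝ) := by
  have hc1 : (1 : ℝ) ≤ c := by exact_mod_cast hc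
  rw [show -2 * ((m : ℂ) + 1) - 3 / 2 = ((-(7 / 2) - 2 * m : ℝ) : ℂ) by push_cast; ring,
    Complex.norm_cpow_real, Complex.norm_intCast, abs_of_pos (by linarith)]
  exact Real.rpow_le_rpow_of_exponent_le hc1 (by linarith [(m.cast_nonneg : (0 : ℝ) ≤ m)])

lemma inv_pow_add_two_le {r Y : ℝ} (hY : 0 < Y) (hYr : Y ≤ r) (m : ℕ) :
    (r ^ (m + 2))⁻¹ ≤ (r ^ 2)⁻¹ * (Y ^ m)⁻¹ := by
  rw [pow_add, mul_inv, mul_comm]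
  gcongr

lemma norm_two_pi_I_div_eight : ‖2 * Real.pi * Complex.I / 8‖ = Real.pi / 4 := by
  rw [norm_div, norm_mul, norm_mul, Complex.norm_I, Complex.norm_real,
    Real.norm_of_nonneg Real.pi_pos.le, Complex.norm_ofNat, Complex.norm_ofNat]
  ring

lemma norm_Rplus_summand_le {c : ℤ} (hc : 0 < c) {z : ℂ} {Y : ℝ} (hY : 0 < Y) (hYz : Y ≤ ‖z‖)
    (m : ℕ) :
    ‖(c : ℂ) ^ (-2 * ((m : ℂ) + 1) - 3 / 2) * z ^ (-(m : ℤ) - 2) *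
        (2 * Real.pi * Complex.I / 8) ^ ((m : ℂ) + 3 / 2) / Complex.Gamma ((m : ℂ) + 1 + 3 / 2)‖
      ≤ (Real.pi / 4) ^ (3 / 2 : ℝ) * ((c : ℝ) ^ (-(7 / 2) : ℝ) * (‖z‖ ^ 2)⁻¹) *
        ((Real.pi / (4 * Y)) ^ m / m !) := by
  have hz : ‖z ^ (-(m : ℤ) - 2)‖ = (‖z‖ ^ (m + 2))⁻¹ := by
    rw [norm_zpow, show -(m : ℤ) - 2 = -((m + 2 : ℕ) : ℤ) by push_cast; ring, zpow_neg,
      zpow_natCast]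
  have hw : ‖(2 * Real.pi * Complex.I / 8) ^ ((m : ℂ) + 3 / 2)‖
      = (Real.pi / 4) ^ (3 / 2 : ℝ) * (Real.pi / 4) ^ m := by
    rw [show (m : ℂ) + 3 / 2 = ((3 / 2 + m : ℝ) : ℂ) by push_cast; ring, Complex.norm_cpow_real,
      norm_two_pi_I_div_eight, Real.rpow_add (by positivity), Real.rpow_natCast]
  have hΓ : ‖Complex.Gamma ((m : ℂ) + 1 + 3 / 2)‖ = Real.Gamma (m + 1 + 3 / 2) := by
    rw [show (m : ℂ) + 1 + 3 / 2 = ((m + 1 + 3 / 2 : ℝ) : ℂ) by push_cast; ring,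
      Complex.Gamma_ofReal, Complex.norm_real, Real.norm_of_nonneg
        (Real.Gamma_pos_of_pos (by positivity)).le]
  have hcm := norm_intCast_cpow_le hc m
  have hzm := inv_pow_add_two_le hY hYz m
  have hΓm := factorial_le_Gamma_add (by norm_num : (1 : ℝ) ≤ 3 / 2) m
  rw [norm_div, norm_mul, norm_mul, hz, hw, hΓ]
  calc _ ≤ (c : ℝ) ^ (-(7 / 2) : ℝ) * ((‖z‖ ^ 2)⁻¹ * (Y ^ m)⁻¹) *
        ((Real.pi / 4) ^ (3 / 2 : ℝ) * (Real.pi / 4) ^ m) / m ! := by gcongr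
    _ = _ := by simp only [div_pow, mul_pow]; field_simp

lemma norm_Splus_summand_le {c : ℤ} (hc : 0 < c) {z : ℂ} {Y : ℝ} (hY : 0 < Y) (hYz : Y ≤ ‖z‖)
    (m : ℕ) :
    ‖(c : ℂ) ^ (-2 * ((m : ℂ) + 1) - 3 / 2) * z ^ (-((m : ℂ) + 1) - 3 / 2) *
        (-(2 * Real.pi * Complex.I) / 8) ^ (m + 1) / ((m + 1)! : ℂ)‖
      ≤ (Real.pi / 4 * Y ^ (-(1 / 2) : ℝ)) * ((c : ℝ) ^ (-(7 / 2) : ℝ) * (‖z‖ ^ 2)⁻¹) *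
        ((Real.pi / (4 * Y)) ^ m / m !) := by
  have hz0 : 0 < ‖z‖ := hY.trans_le hYz
  have hz : ‖z ^ (-((m : ℂ) + 1) - 3 / 2)‖ = (‖z‖ ^ (m + 2))⁻¹ * ‖z‖ ^ (-(1 / 2) : ℝ) := by
    rw [show -((m : ℂ) + 1) - 3 / 2 = ((-((m + 2 : ℕ) : ℝ) + -(1 / 2) : ℝ) : ℂ) by push_cast; ring,
      Complex.norm_cpow_real, Real.rpow_add hz0, Real.rpow_neg hz0.le, Real.rpow_natCast]
  have hw : ‖(-(2 * Real.pi * Complex.I) / 8) ^ (m + 1)‖ = (Real.pi / 4) ^ (m + 1) := by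
    rw [norm_pow, neg_div, norm_neg, norm_two_pi_I_div_eight]
  have hcm := norm_intCast_cpow_le hc m
  have hzm := inv_pow_add_two_le hY hYz m
  have hzY : ‖z‖ ^ (-(1 / 2) : ℝ) ≤ Y ^ (-(1 / 2) : ℝ) :=
    Real.rpow_le_rpow_of_nonpos hY hYz (by norm_num)
  have hfac : (m ! : ℝ) ≤ (m + 1)! := mod_cast Nat.factorial_le m.le_succ
  rw [norm_div, norm_mul, norm_mul, hz, hw, Complex.norm_natCast]
  calc _ ≤ (c : ℝ) ^ (-(7 / 2) : ℝ) * ((‖z‖ ^ 2)⁻¹ * (Y ^ m)⁻¹ * Y ^ (-(1 / 2) : ℝ)) *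
        (Real.pi / 4) ^ (m + 1) / m ! := by gcongr
    _ = _ := by simp only [div_pow, mul_pow]; field_simp; ring

lemma norm_Rplus_le (n h : ℕ) {c : ℤ} (d : ℤ) (hc : 0 < c) {τ : ℂ} {Y : ℝ} (hY : 0 < Y)
    (hYτ : Y ≤ ‖τ + d / c‖) :
    ‖Rplus n h c d τ‖ ≤ (Real.pi / 4) ^ (3 / 2 : ℝ) *
      ((c : ℝ) ^ (-(7 / 2) : ℝ) * (‖τ + d / c‖ ^ 2)⁻¹) * Real.exp (Real.pi / (4 * Y)) := by
  have hee : ‖ee (-((ab c d).1 : ℂ) / (8 * c))‖ = 1 := by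
    simpa using norm_ee_ofReal (-(ab c d).1 / (8 * c))
  rw [Rplus, norm_mul, norm_mul, norm_psi n h _ _ d hc, hee, one_mul, one_mul]
  exact norm_tsum_le_mul_exp (norm_Rplus_summand_le hc hY hYτ)

lemma norm_Splus_le (n h : ℕ) {c : ℤ} (d : ℤ) (hc : 0 < c) {τ : ℂ} {Y : ℝ} (hY : 0 < Y)
    (hYτ : Y ≤ ‖τ + d / c‖) :
    ‖Splus n h c d τ‖ ≤ (Real.pi / 4 * Y ^ (-(1 / 2) : ℝ)) *
      ((c : ℝ) ^ (-(7 / 2) : ℝ) * (‖τ + d / c‖ ^ 2)⁻¹) * Real.exp (Real.pi / (4 * Y)) := by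
  have hee : ‖ee (((ab c d).1 : ℂ) / (8 * c))‖ = 1 := by
    simpa using norm_ee_ofReal ((ab c d).1 / (8 * c))
  rw [Splus, norm_mul, norm_mul, norm_inv, norm_psi n h _ _ d hc, hee, inv_one, one_mul, one_mul]
  exact norm_tsum_le_mul_exp (norm_Splus_summand_le hc hY hYτ)

lemma le_norm_add_div {c d : ℤ} {τ : ℂ} {Y : ℝ} (hYτ : Y ≤ τ.im) : Y ≤ ‖τ + d / c‖ :=
  hYτ.trans (by simpa using Complex.im_le_norm (τ + d / c))

lemma one_add_abs_le_mul_norm {c d : ℤ} (hc : 0 < c) {τ : ℂ} {Y X : ℝ} (hY : 0 < Y)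
    (hYτ : Y ≤ τ.im) (hτX : ‖τ‖ ≤ X) :
    Y * (1 + |(d : ℝ)|) ≤ (1 + Y + X) * ‖c * τ + d‖ := by
  have hc1 : (1 : ℝ) ≤ c := by exact_mod_cast hc
  have him : c * Y ≤ ‖c * τ + d‖ := by
    calc c * Y ≤ (c * τ + d : ℂ).im := by simpa using mul_le_mul_of_nonneg_left hYτ (by positivity)
      _ ≤ ‖c * τ + d‖ := Complex.im_le_norm _
  have hd : |(d : ℝ)| ≤ ‖c * τ + d‖ + c * ‖τ‖ := by
    calc |(d : ℝ)| = ‖(c * τ + d) - c * τ‖ := by simp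
      _ ≤ ‖c * τ + d‖ + c * ‖τ‖ := by
        simpa [abs_of_pos (by positivity : (0 : ℝ) < c)] using norm_sub_le (c * τ + d : ℂ) (c * τ)
  nlinarith [norm_nonneg τ, mul_le_mul_of_nonneg_left hτX (by positivity : (0 : ℝ) ≤ c * Y)]

def latticeMajorant (p : ℤ × ℤ) : ℝ := |(p.1 : ℝ)| ^ (-(3 / 2) : ℝ) * ((1 + |(p.2 : ℝ)|) ^ 2)⁻¹

lemma latticeMajorant_nonneg (p : ℤ × ℤ) : 0 ≤ latticeMajorant p := by
  unfold latticeMajorant; positivity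

lemma summable_latticeMajorant : Summable latticeMajorant := by
  have hnat : Summable fun n : ℕ => ((1 + (n : ℝ)) ^ 2)⁻¹ := by
    simpa [add_comm] using (summable_nat_add_iff 1).2 (Real.summable_nat_pow_inv.2 one_lt_two)
  have hint : Summable fun d : ℤ => ((1 + |(d : ℝ)|) ^ 2)⁻¹ :=
    .of_nat_of_neg (by simpa using hnat) (by simpa using hnat)
  exact (Real.summable_abs_int_rpow (by norm_num)).mul_of_nonneg hint (fun _ => by positivity)
    (fun _ => by positivity)

lemma rpow_mul_inv_norm_sq_le_latticeMajorant {c d : ℤ} (hc : 0 < c) {τ : ℂ} {Y X : ℝ}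
    (hY : 0 < Y) (hYτ : Y ≤ τ.im) (hτX : ‖τ‖ ≤ X) :
    (c : ℝ) ^ (-(7 / 2) : ℝ) * (‖τ + d / c‖ ^ 2)⁻¹
      ≤ ((1 + Y + X) / Y) ^ 2 * latticeMajorant (c, d) := by
  have hc0 : (0 : ℝ) < c := by exact_mod_cast hc
  have hX : 0 ≤ X := (norm_nonneg τ).trans hτX
  have hnorm : ‖τ + d / c‖ = ‖c * τ + d‖ / c := by
    have hc0' : (c : ℂ) ≠ 0 := by exact_mod_cast hc.ne'
    rw [show (c : ℂ) * τ + d = c * (τ + d / c) by field_simp, norm_mul, Complex.norm_intCast,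
      abs_of_pos hc0, mul_div_cancel_left₀ _ hc0.ne']
  have hlow : Y * (1 + |(d : ℝ)|) / (1 + Y + X) ≤ ‖(c : ℂ) * τ + d‖ := by
    rw [div_le_iff₀ (by positivity), mul_comm _ (1 + Y + X)]
    exact one_add_abs_le_mul_norm hc hY hYτ hτX
  have hpow : (c : ℝ) ^ (-(7 / 2) : ℝ) * c ^ 2 = |(c : ℝ)| ^ (-(3 / 2) : ℝ) := by
    rw [abs_of_pos hc0, ← Real.rpow_natCast, ← Real.rpow_add hc0]; norm_num
  calc (c : ℝ) ^ (-(7 / 2) : ℝ) * (‖τ + d / c‖ ^ 2)⁻¹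
      = |(c : ℝ)| ^ (-(3 / 2) : ℝ) * (‖(c : ℂ) * τ + d‖ ^ 2)⁻¹ := by
        rw [hnorm, ← hpow]; field_simp
    _ ≤ |(c : ℝ)| ^ (-(3 / 2) : ℝ) * ((Y * (1 + |(d : ℝ)|) / (1 + Y + X)) ^ 2)⁻¹ := by
        gcongr
    _ = ((1 + Y + X) / Y) ^ 2 * latticeMajorant (c, d) := by
        rw [latticeMajorant]; field_simp

lemma norm_RplusAbs_le (n h : ℕ) {τ : ℂ} {Y X : ℝ} (hY : 0 < Y) (hYτ : Y ≤ τ.im) (hτX : ‖τ‖ ≤ X)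
    (p : ℤ × ℤ) :
    ‖RplusAbs n h p τ‖ ≤ ((Real.pi / 4) ^ (3 / 2 : ℝ) * Real.exp (Real.pi / (4 * Y)) *
      ((1 + Y + X) / Y) ^ 2) * latticeMajorant p := by
  unfold RplusAbs
  split_ifs with hp
  · rw [norm_norm]
    calc _ ≤ _ := norm_Rplus_le n h p.2 hp.1 hY (le_norm_add_div hYτ)
      _ ≤ (Real.pi / 4) ^ (3 / 2 : ℝ) * (((1 + Y + X) / Y) ^ 2 * latticeMajorant p) *
          Real.exp (Real.pi / (4 * Y)) := by
        gcongr _ * ?_ * _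
        exact rpow_mul_inv_norm_sq_le_latticeMajorant hp.1 hY hYτ hτX
      _ = _ := by ring
  · rw [norm_zero]; have := latticeMajorant_nonneg p; positivity

lemma norm_SplusAbs_le (n h : ℕ) {τ : ℂ} {Y X : ℝ} (hY : 0 < Y) (hYτ : Y ≤ τ.im) (hτX : ‖τ‖ ≤ X)
    (p : ℤ × ℤ) :
    ‖SplusAbs n h p τ‖ ≤ (Real.pi / 4 * Y ^ (-(1 / 2) : ℝ) * Real.exp (Real.pi / (4 * Y)) *
      ((1 + Y + X) / Y) ^ 2) * latticeMajorant p := by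
  unfold SplusAbs
  split_ifs with hp
  · rw [norm_norm]
    calc _ ≤ _ := norm_Splus_le n h p.2 hp.1 hY (le_norm_add_div hYτ)
      _ ≤ (Real.pi / 4 * Y ^ (-(1 / 2) : ℝ)) * (((1 + Y + X) / Y) ^ 2 * latticeMajorant p) *
          Real.exp (Real.pi / (4 * Y)) := by
        gcongr _ * ?_ * _
        exact rpow_mul_inv_norm_sq_le_latticeMajorant hp.1 hY hYτ hτX
      _ = _ := by ring
  · rw [norm_zero]; have := latticeMajorant_nonneg p; positivity

lemma isOpen_HH : IsOpen HH :=
  isOpen_lt continuous_const Complex.continuous_im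

lemma summable_and_tendstoLocallyUniformlyOn_tsum_of_norm_le {ι F : Type*}
    [NormedAddCommGroup F] [CompleteSpace F] {f : ι → ℂ → F} {u : ι → ℝ} (hu : Summable u)
    (C : ℝ → ℝ → ℝ)
    (hf : ∀ Y X τ i, 0 < Y → Y ≤ τ.im → ‖τ‖ ≤ X → ‖f i τ‖ ≤ C Y X * u i) :
    (∀ τ ∈ HH, Summable fun i => f i τ) ∧
      TendstoLocallyUniformlyOn (fun s : Finset ι => fun τ => ∑ i ∈ s, f i τ)
        (fun τ => ∑' i, f i τ) atTop HH := by
  refine ⟨fun τ hτ => (hu.mul_left _).of_norm_bounded fun i => hf _ _ τ i hτ le_rfl le_rfl, ?_⟩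
  rw [tendstoLocallyUniformlyOn_iff_forall_isCompact isOpen_HH]
  intro K hKH hK
  obtain ⟨Y, hY, hYK⟩ := hK.exists_forall_le' Complex.continuous_im.continuousOn
    fun τ hτ => (hKH hτ : 0 < τ.im)
  obtain ⟨X, hXK⟩ := hK.exists_bound_of_continuousOn continuousOn_id
  exact tendstoUniformlyOn_tsum (hu.mul_left (C Y X))
    fun i τ hτ => hf Y X τ i hY (hYK τ hτ) (hXK τ hτ)

theorem Rplus_Splus_abs_convergence_general (n h : ℕ) :
    (∀ τ ∈ HH, Summable (fun p : ℤ × ℤ => RplusAbs n h p τ)) ∧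
    (∀ τ ∈ HH, Summable (fun p : ℤ × ℤ => SplusAbs n h p τ)) ∧
    TendstoLocallyUniformlyOn
      (fun s : Finset (ℤ × ℤ) => fun τ => ∑ p ∈ s, RplusAbs n h p τ)
      (fun τ => ∑' p : ℤ × ℤ, RplusAbs n h p τ) atTop HH ∧
    TendstoLocallyUniformlyOn
      (fun s : Finset (ℤ × ℤ) => fun τ => ∑ p ∈ s, SplusAbs n h p τ)
      (fun τ => ∑' p : ℤ × ℤ, SplusAbs n h p τ) atTop HH := by
  obtain ⟨hR, hR'⟩ := summable_and_tendstoLocallyUniformlyOn_tsum_of_norm_le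
    summable_latticeMajorant _ fun _ _ _ p hY hYτ hτX => norm_RplusAbs_le n h hY hYτ hτX p
  obtain ⟨hS, hS'⟩ := summable_and_tendstoLocallyUniformlyOn_tsum_of_norm_le
    summable_latticeMajorant _ fun _ _ _ p hY hYτ hτX => norm_SplusAbs_le n h hY hYτ hτX p
  exact ⟨hR, hS, hR', hS'⟩

/-- The sums `Σ_{(c,d)} |R⁺_{c,d}(τ)|` and `Σ_{(c,d)} |S⁺_{c,d}(τ)|`, over all
pairs `(c,d)` with `c > 0`, `n | c`, `gcd(c,d) = 1`, converge, locally uniformly on `ℍ`. -/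
theorem Rplus_Splus_abs_convergence (n h : ℕ) (hn : 0 < n) (hh : 0 < h)
    (hhn : h ∣ n) (hh24 : h ∣ 24) :
    (∀ τ ∈ HH, Summable (fun p : ℤ × ℤ => RplusAbs n h p τ)) ∧
    (∀ τ ∈ HH, Summable (fun p : ℤ × ℤ => SplusAbs n h p τ)) ∧
    TendstoLocallyUniformlyOn
      (fun s : Finset (ℤ × ℤ) => fun τ => ∑ p ∈ s, RplusAbs n h p τ)
      (fun τ => ∑' p : ℤ × ℤ, RplusAbs n h p τ) atTop HH ∧
    TendstoLocallyUniformlyOn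
      (fun s : Finset (ℤ × ℤ) => fun τ => ∑ p ∈ s, SplusAbs n h p τ)
      (fun τ => ∑' p : ℤ × ℤ, SplusAbs n h p τ) atTop HH :=
  Rplus_Splus_abs_convergence_general n h

end Rademacher
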